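/- Let (s_0, s_1) and (t_0, t_1) denote the roots of the quadratics Q(x) = x² + cx + d and P(x) = x² + ax + b with real roots, satisfying a = c and the roots of Q majorized by the roots of P, i.e. a = c and √(a²−4d) ≤ √(a²−4b). Let λ_0 ≥ 0, λ_1 ∈ ℝ be such that the operator T with T[1] = λ_0, T[x] = λ_1x, T[x²] = x² maps degree-two hyperbolic monics to hyperbolic monics. Then the roots of T[Q](x) = x² + λ_1cx + λ_0d are majorized by the roots of T[P](x) = x² + λ_1ax + λ_0b. -/

import Mathlib

open Finset

/-- Classical majorization of `n`-tuples via convex functions. -/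
def MajorizedOn (n : ℕ) (x y : ℕ → ℝ) : Prop :=
  ∀ f : ℝ → ℝ, ConvexOn ℝ Set.univ f →
    ∑ i ∈ Finset.range n, f (x i) ≤ ∑ i ∈ Finset.range n, f (y i)

/-- The roots of a monic real quadratic `x² + px + q` with `p² ≥ 4q`, as a `2`-tuple. -/
noncomputable def quadRoots (p q : ℝ) : ℕ → ℝ := fun i =>
  if i = 0 then (-p - Real.sqrt (p ^ 2 - 4 * q)) / 2
  else (-p + Real.sqrt (p ^ 2 - 4 * q)) / 2

lemma convex_symm_spread (f : ℝ → ℝ) (hf : ConvexOn ℝ Set.univ f)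
    (m s t : ℝ) (hs : 0 ≤ s) (hst : s ≤ t) :
    f (m - s) + f (m + s) ≤ f (m - t) + f (m + t) := by
  rcases eq_or_lt_of_le (hs.trans hst) with h | ht
  · have hs0 : s = 0 := le_antisymm (hst.trans h.symm.le) hs
    rw [← h, hs0]
  · set θ : ℝ := (t + s) / (2 * t) with hθ
    have h2t : (0:ℝ) < 2 * t := by linarith
    have hθ0 : 0 ≤ θ := by positivity
    have hθ1 : θ ≤ 1 := by
      rw [hθ, div_le_one h2t]; linarith
    have h1θ : 1 - θ = (t - s) / (2 * t) := by
      rw [hθ]; field_simp; ring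
    have e1 : θ * (m - t) + (1 - θ) * (m + t) = m - s := by
      rw [h1θ, hθ]; field_simp; ring
    have e2 : (1 - θ) * (m - t) + θ * (m + t) = m + s := by
      rw [h1θ, hθ]; field_simp; ring
    have hθ' : (0:ℝ) ≤ 1 - θ := by linarith
    have hsum : θ + (1 - θ) = 1 := by ring
    have hsum' : (1 - θ) + θ = 1 := by ring
    have c1 := hf.2 (Set.mem_univ (m - t)) (Set.mem_univ (m + t)) hθ0 hθ' hsum
    have c2 := hf.2 (Set.mem_univ (m - t)) (Set.mem_univ (m + t)) hθ' hθ0 hsum'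
    simp only [smul_eq_mul] at c1 c2
    rw [e1] at c1
    rw [e2] at c2
    linarith

/-- A hyperbolicity-preserving diagonal operator on monic quadratics preserves the
spectral order. -/
theorem quadratic_multiplier_preserves_majorization
    (a b c d lam₀ lam₁ : ℝ)
    (hac : a = c)
    (hPhyp : a ^ 2 ≥ 4 * b) (hQhyp : c ^ 2 ≥ 4 * d)
    (hmaj : Real.sqrt (a ^ 2 - 4 * d) ≤ Real.sqrt (a ^ 2 - 4 * b))
    (hlam₀ : 0 ≤ lam₀)
    (hT : ∀ u v : ℝ, u ^ 2 ≥ 4 * v → (lam₁ * u) ^ 2 ≥ 4 * (lam₀ * v)) :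
    MajorizedOn 2 (quadRoots (lam₁ * c) (lam₀ * d)) (quadRoots (lam₁ * a) (lam₀ * b)) := by
  subst hac
  intro f hf
  -- b ≤ d
  have hd0 : 0 ≤ a ^ 2 - 4 * d := by linarith
  have hb0 : 0 ≤ a ^ 2 - 4 * b := by linarith
  have hbd : b ≤ d := by
    nlinarith [Real.sq_sqrt hd0, Real.sq_sqrt hb0, Real.sqrt_nonneg (a ^ 2 - 4 * d),
      Real.sqrt_nonneg (a ^ 2 - 4 * b), hmaj]
  have hDQ : 0 ≤ (lam₁ * a) ^ 2 - 4 * (lam₀ * d) := by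
    have := hT a d hQhyp; linarith
  have hDP : (lam₁ * a) ^ 2 - 4 * (lam₀ * d) ≤ (lam₁ * a) ^ 2 - 4 * (lam₀ * b) := by
    nlinarith
  have hsqrt : Real.sqrt ((lam₁ * a) ^ 2 - 4 * (lam₀ * d)) ≤
      Real.sqrt ((lam₁ * a) ^ 2 - 4 * (lam₀ * b)) := Real.sqrt_le_sqrt hDP
  simp only [Finset.sum_range_succ, Finset.sum_range_zero, quadRoots]
  norm_num
  have key := convex_symm_spread f hf (-(lam₁ * a) / 2)
    (Real.sqrt ((lam₁ * a) ^ 2 - 4 * (lam₀ * d)) / 2)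
    (Real.sqrt ((lam₁ * a) ^ 2 - 4 * (lam₀ * b)) / 2)
    (by positivity) (by linarith)
  have e1 : ∀ D : ℝ, (-(lam₁ * a) - D) / 2 = -(lam₁ * a) / 2 - D / 2 := by intro D; ring
  have e2 : ∀ D : ℝ, (-(lam₁ * a) + D) / 2 = -(lam₁ * a) / 2 + D / 2 := by intro D; ring
  simp only [e1, e2]
  exact key
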